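/- For positive semidefinite matrices B, Δ and p ≥ 1, the derivative at t = 0 of t ↦ Tr (B + tΔ)^p equals p·Tr(B^{p−1} Δ). -/

import Mathlib

open Matrix
open scoped ComplexOrder

open scoped Classical in
/-- `Tr M^p` for a Hermitian matrix `M`, via the spectral decomposition. -/
noncomputable def trPow {n : Type*} [Fintype n] [DecidableEq n]
    (M : Matrix n n ℂ) (p : ℝ) : ℝ :=
  if h : M.IsHermitian then ∑ i, h.eigenvalues i ^ p else 0

open scoped Classical in
/-- The `r`-th power `M^r` of a Hermitian complex matrix, via the spectral decomposition. -/
noncomputable def matRpow {n : Type*} [Fintype n] [DecidableEq n]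
    (M : Matrix n n ℂ) (r : ℝ) : Matrix n n ℂ :=
  if h : M.IsHermitian then
    (h.eigenvectorUnitary : Matrix n n ℂ) *
      Matrix.diagonal (fun i => ((h.eigenvalues i ^ r : ℝ) : ℂ)) *
        (h.eigenvectorUnitary : Matrix n n ℂ)ᴴ
  else 0

set_option maxHeartbeats 1000000

open Polynomial

set_option linter.unusedSectionVars false

variable {n : Type*} [Fintype n] [DecidableEq n]


lemma trPow_eq {M : Matrix n n ℂ} (hM : M.IsHermitian) (p : ℝ) :
    trPow M p = ∑ i, hM.eigenvalues i ^ p := by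
  rw [trPow, dif_pos hM]

lemma matRpow_eq {M : Matrix n n ℂ} (hM : M.IsHermitian) (r : ℝ) :
    matRpow M r = (hM.eigenvectorUnitary : Matrix n n ℂ) *
      Matrix.diagonal (fun i => ((hM.eigenvalues i ^ r : ℝ) : ℂ)) *
        (hM.eigenvectorUnitary : Matrix n n ℂ)ᴴ := by
  rw [matRpow, dif_pos hM]

variable {n : Type*} [Fintype n] [DecidableEq n]

lemma trace_diagonal_mul (d : n → ℂ) (A : Matrix n n ℂ) :
    (Matrix.diagonal d * A).trace = ∑ i, d i * A i i := by
  simp [Matrix.trace, Matrix.diag, Matrix.diagonal_mul]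

lemma trace_conj_diag_mul (U : Matrix n n ℂ) (d : n → ℂ) (A : Matrix n n ℂ) :
    ((U * Matrix.diagonal d * Uᴴ) * A).trace = ∑ i, d i * (Uᴴ * A * U) i i := by
  rw [show (U * Matrix.diagonal d * Uᴴ) * A = U * (Matrix.diagonal d * (Uᴴ * A)) by
        simp [mul_assoc],
      Matrix.trace_mul_comm U, mul_assoc, trace_diagonal_mul]

lemma conj_diag_apply (W : Matrix n n ℂ) (d : n → ℂ) (i : n) :
    (W * Matrix.diagonal d * Wᴴ) i i = ∑ j, d j * ((Complex.normSq (W i j) : ℝ) : ℂ) := by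
  rw [mul_assoc]
  simp only [Matrix.mul_apply, Matrix.conjTranspose_apply, Matrix.diagonal_apply, ite_mul,
    zero_mul, Finset.sum_ite_eq, Finset.mem_univ, if_true]
  refine Finset.sum_congr rfl fun j _ => ?_
  rw [show ((Complex.normSq (W i j) : ℝ) : ℂ) = W i j * star (W i j) from
    (Complex.mul_conj _).symm]
  ring

-- diagonal entries of PSD matrices are nonneg reals
lemma psd_diag_nonneg {A : Matrix n n ℂ} (hA : A.PosSemidef) (i : n) :
    (0:ℂ) ≤ A i i := by
  have := hA.dotProduct_mulVec_nonneg (Pi.single i 1)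
  simpa [dotProduct, Matrix.mulVec, Pi.single_apply] using this

lemma psd_re_diag_nonneg {A : Matrix n n ℂ} (hA : A.PosSemidef) (i : n) :
    0 ≤ (A i i).re := by
  have := psd_diag_nonneg hA i
  rw [Complex.le_def] at this; simpa using this.1

-- unitary row sums
lemma unitary_row_normSq_sum {W : Matrix n n ℂ} (hW : W * Wᴴ = 1) (i : n) :
    ∑ j, Complex.normSq (W i j) = 1 := by
  have := congrArg (fun M : Matrix n n ℂ => M i i) hW
  simp only [Matrix.mul_apply, Matrix.conjTranspose_apply, Matrix.one_apply_eq] at this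
  have h2 : ∀ j, W i j * star (W i j) = ((Complex.normSq (W i j) : ℝ) : ℂ) := fun j =>
    Complex.mul_conj _
  rw [Finset.sum_congr rfl fun j _ => h2 j] at this
  exact_mod_cast this

lemma unitary_col_normSq_sum {W : Matrix n n ℂ} (hW : Wᴴ * W = 1) (j : n) :
    ∑ i, Complex.normSq (W i j) = 1 := by
  have := congrArg (fun M : Matrix n n ℂ => M j j) hW
  simp only [Matrix.mul_apply, Matrix.conjTranspose_apply, Matrix.one_apply_eq] at this
  have h2 : ∀ i, star (W i j) * W i j = ((Complex.normSq (W i j) : ℝ) : ℂ) := fun i => by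
    rw [mul_comm]; exact Complex.mul_conj _
  rw [Finset.sum_congr rfl fun i _ => h2 i] at this
  exact_mod_cast this

-- trace is sum of eigenvalues
lemma trace_eq_sum_eigenvalues {A : Matrix n n ℂ} (hA : A.IsHermitian) :
    A.trace = ∑ i, (hA.eigenvalues i : ℂ) := by
  conv_lhs => rw [hA.spectral_theorem, Unitary.conjStarAlgAut_apply]
  rw [show (hA.eigenvectorUnitary : Matrix n n ℂ) * Matrix.diagonal (RCLike.ofReal ∘ hA.eigenvalues)
        * (star (hA.eigenvectorUnitary : Matrix n n ℂ))
      = (hA.eigenvectorUnitary : Matrix n n ℂ) * (Matrix.diagonal (RCLike.ofReal ∘ hA.eigenvalues)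
        * (star (hA.eigenvectorUnitary : Matrix n n ℂ))) from mul_assoc _ _ _,
    Matrix.trace_mul_comm, mul_assoc]
  rw [show (star (hA.eigenvectorUnitary : Matrix n n ℂ)) * (hA.eigenvectorUnitary : Matrix n n ℂ) = 1
    from Matrix.mem_unitaryGroup_iff'.mp hA.eigenvectorUnitary.2, mul_one]
  simp [Matrix.trace, Matrix.diag]

lemma tangent_rpow {a b p : ℝ} (ha : 0 ≤ a) (hb : 0 ≤ b) (hp : 1 ≤ p) :
    a ^ p + p * a ^ (p - 1) * (b - a) ≤ b ^ p := by
  rcases eq_or_lt_of_le ha with h0 | h0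
  · rcases eq_or_lt_of_le hp with h1 | h1
    · simp [← h0, ← h1]
    · rw [← h0]
      rw [Real.zero_rpow (by linarith), Real.zero_rpow (by linarith)]
      simpa using Real.rpow_nonneg hb p
  · set s := b / a - 1 with hs
    have hs1 : -1 ≤ s := by
      have : 0 ≤ b / a := div_nonneg hb h0.le
      simp [hs]; linarith
    have key := one_add_mul_self_le_rpow_one_add hs1 hp
    have h1s : 1 + s = b / a := by ring
    rw [h1s] at key
    have hap : 0 < a ^ p := Real.rpow_pos_of_pos h0 p
    have := mul_le_mul_of_nonneg_left key hap.le
    rw [Real.div_rpow hb h0.le] at this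
    have hbp : a ^ p * (b ^ p / a ^ p) = b ^ p := by field_simp
    rw [hbp] at this
    calc a ^ p + p * a ^ (p-1) * (b - a)
        = a ^ p * (1 + p * s) := by
          have : a ^ (p - 1) = a ^ p / a := by
            rw [Real.rpow_sub h0, Real.rpow_one]
          rw [this, hs]; field_simp
      _ ≤ b ^ p := this

theorem klein {X Y : Matrix n n ℂ} (hX : X.PosSemidef) (hY : Y.PosSemidef)
    {p : ℝ} (hp : 1 ≤ p) :
    trPow Y p + p * ((matRpow Y (p-1)) * (X - Y)).trace.re ≤ trPow X p := by
  classical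
  set V : Matrix n n ℂ := (hY.1.eigenvectorUnitary : Matrix n n ℂ) with hV
  set U : Matrix n n ℂ := (hX.1.eigenvectorUnitary : Matrix n n ℂ) with hU
  set μ := hY.1.eigenvalues
  set lam := hX.1.eigenvalues
  set W : Matrix n n ℂ := Vᴴ * U with hW
  set w : n → n → ℝ := fun i j => Complex.normSq (W i j) with hw
  have hUU : U * Uᴴ = 1 := Matrix.mem_unitaryGroup_iff.mp hX.1.eigenvectorUnitary.2
  have hUU' : Uᴴ * U = 1 := Matrix.mem_unitaryGroup_iff'.mp hX.1.eigenvectorUnitary.2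
  have hVV : V * Vᴴ = 1 := Matrix.mem_unitaryGroup_iff.mp hY.1.eigenvectorUnitary.2
  have hVV' : Vᴴ * V = 1 := Matrix.mem_unitaryGroup_iff'.mp hY.1.eigenvectorUnitary.2
  have hWW : W * Wᴴ = 1 := by
    rw [hW, Matrix.conjTranspose_mul, Matrix.conjTranspose_conjTranspose,
      show Vᴴ * U * (Uᴴ * V) = Vᴴ * (U * Uᴴ) * V by simp [mul_assoc], hUU, mul_one, hVV']
  have hWW' : Wᴴ * W = 1 := by
    rw [hW, Matrix.conjTranspose_mul, Matrix.conjTranspose_conjTranspose,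
      show Uᴴ * V * (Vᴴ * U) = Uᴴ * (V * Vᴴ) * U by simp [mul_assoc], hVV, mul_one, hUU']
  have hrow : ∀ i, ∑ j, w i j = 1 := unitary_row_normSq_sum hWW
  have hcol : ∀ j, ∑ i, w i j = 1 := unitary_col_normSq_sum hWW'
  have hwnn : ∀ i j, 0 ≤ w i j := fun i j => Complex.normSq_nonneg _
  have hμnn : ∀ i, 0 ≤ μ i := hY.eigenvalues_nonneg
  have hlnn : ∀ j, 0 ≤ lam j := hX.eigenvalues_nonneg
  -- diagonal entries of V^H X V
  have hVXV : ∀ i, (Vᴴ * X * V) i i = ((∑ j, w i j * lam j : ℝ) : ℂ) := by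
    intro i
    have hXspec : X = U * Matrix.diagonal (RCLike.ofReal ∘ lam) * Uᴴ := hX.1.spectral_theorem
    have h2 : Vᴴ * X * V = W * Matrix.diagonal (RCLike.ofReal ∘ lam) * Wᴴ := by
      rw [hXspec, hW, Matrix.conjTranspose_mul, Matrix.conjTranspose_conjTranspose]
      simp [mul_assoc]
    rw [h2, conj_diag_apply, Complex.ofReal_sum]
    refine Finset.sum_congr rfl fun j _ => ?_
    have e3 : ((w i j * lam j : ℝ) : ℂ) = ((Complex.normSq (W i j) : ℝ) : ℂ) * ((lam j : ℝ) : ℂ) := by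
      push_cast; rfl
    rw [e3]
    exact mul_comm _ _
  -- diagonal entries of V^H Y V
  have hVYV : ∀ i, (Vᴴ * Y * V) i i = ((μ i : ℝ) : ℂ) := by
    intro i
    have h2 := hY.1.conjStarAlgAut_star_eigenvectorUnitary
    rw [Unitary.conjStarAlgAut_star_apply] at h2
    rw [Matrix.star_eq_conjTranspose] at h2
    rw [h2]
    simp [Matrix.diagonal_apply_eq]
    rfl
  have hdiag : ∀ i, (Vᴴ * (X - Y) * V) i i = (((∑ j, w i j * lam j) - μ i : ℝ) : ℂ) := by
    intro i
    have e : Vᴴ * (X - Y) * V = Vᴴ * X * V - Vᴴ * Y * V := by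
      simp [Matrix.mul_sub, Matrix.sub_mul]
    rw [e, Matrix.sub_apply, hVXV, hVYV]
    push_cast; ring
  -- the trace term
  have hT : ((matRpow Y (p-1)) * (X - Y)).trace
      = ((∑ i, μ i ^ (p-1) * ((∑ j, w i j * lam j) - μ i) : ℝ) : ℂ) := by
    rw [matRpow_eq hY.1, trace_conj_diag_mul, Complex.ofReal_sum]
    refine Finset.sum_congr rfl fun i _ => ?_
    have e4 : ((hY.1.eigenvectorUnitary : Matrix n n ℂ)ᴴ * (X - Y)
        * (hY.1.eigenvectorUnitary : Matrix n n ℂ)) i i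
        = (((∑ j, w i j * lam j) - μ i : ℝ) : ℂ) := hdiag i
    rw [e4]
    push_cast
    ring
  rw [trPow_eq hY.1, trPow_eq hX.1, hT, Complex.ofReal_re]
  have hRHS : ∑ j, lam j ^ p = ∑ i, ∑ j, w i j * lam j ^ p := by
    rw [Finset.sum_comm]
    refine Finset.sum_congr rfl fun j _ => ?_
    rw [← Finset.sum_mul, hcol j, one_mul]
  rw [hRHS, Finset.mul_sum, ← Finset.sum_add_distrib]
  refine Finset.sum_le_sum fun i _ => ?_
  have per : ∀ j, w i j * (μ i ^ p + p * μ i ^ (p-1) * (lam j - μ i)) ≤ w i j * lam j ^ p :=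
    fun j => mul_le_mul_of_nonneg_left (tangent_rpow (hμnn i) (hlnn j) hp) (hwnn i j)
  have hsum := Finset.sum_le_sum fun j (_ : j ∈ Finset.univ) => per j
  have e1 : ∑ j, w i j * (μ i ^ p + p * μ i ^ (p-1) * (lam j - μ i))
      = (∑ j, w i j) * (μ i ^ p - p * μ i ^ (p-1) * μ i)
        + p * μ i ^ (p-1) * (∑ j, w i j * lam j) := by
    rw [Finset.sum_mul, Finset.mul_sum, ← Finset.sum_add_distrib]
    exact Finset.sum_congr rfl fun j _ => by ring
  rw [e1, hrow i, one_mul] at hsum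
  calc μ i ^ p + p * (μ i ^ (p-1) * ((∑ j, w i j * lam j) - μ i))
      = μ i ^ p - p * μ i ^ (p-1) * μ i + p * μ i ^ (p-1) * (∑ j, w i j * lam j) := by ring
    _ ≤ ∑ j, w i j * lam j ^ p := hsum

lemma psd_smul {Δ : Matrix n n ℂ} (hΔ : Δ.PosSemidef) {t : ℝ} (ht : 0 ≤ t) :
    (t • Δ).PosSemidef := by
  refine Matrix.PosSemidef.of_dotProduct_mulVec_nonneg ?_ ?_
  · unfold Matrix.IsHermitian
    rw [Matrix.conjTranspose_smul, hΔ.1.eq, star_trivial]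
  · intro x
    have := hΔ.dotProduct_mulVec_nonneg x
    rw [Matrix.smul_mulVec, dotProduct_smul]
    rw [show t • (dotProduct (star x) (Δ *ᵥ x)) = (t:ℂ) * (dotProduct (star x) (Δ *ᵥ x)) from by
      simp [Complex.real_smul]]
    exact mul_nonneg (by exact_mod_cast Complex.zero_le_real.2 ht) this

/-- conjugation by a unitary as an `ℝ`-algebra hom -/
noncomputable def conjAlgHom (U : Matrix n n ℂ) (h1 : U * Uᴴ = 1) (h2 : Uᴴ * U = 1) :
    Matrix n n ℂ →ₐ[ℝ] Matrix n n ℂ where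
  toFun A := U * A * Uᴴ
  map_one' := by show U * 1 * Uᴴ = 1; rw [mul_one, h1]
  map_mul' A B := by
    rw [show U * A * Uᴴ * (U * B * Uᴴ) = U * A * (Uᴴ * U) * B * Uᴴ by simp [mul_assoc], h2]
    simp [mul_assoc]
  map_zero' := by simp
  map_add' A B := by simp [Matrix.mul_add, Matrix.add_mul]
  commutes' r := by
    rw [show (algebraMap ℝ (Matrix n n ℂ)) r = ((r:ℝ):ℂ) • (1 : Matrix n n ℂ) from by
      simp [Algebra.algebraMap_eq_smul_one]]
    show U * (((r:ℝ):ℂ) • (1:Matrix n n ℂ)) * Uᴴ = _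
    rw [Matrix.mul_smul, mul_one, Matrix.smul_mul, h1]

lemma aeval_hermitian {M : Matrix n n ℂ} (hM : M.IsHermitian) (q : ℝ[X]) :
    Polynomial.aeval M q = (hM.eigenvectorUnitary : Matrix n n ℂ) *
      Matrix.diagonal (fun i => ((q.eval (hM.eigenvalues i) : ℝ) : ℂ)) *
        (hM.eigenvectorUnitary : Matrix n n ℂ)ᴴ := by
  have h1 : (hM.eigenvectorUnitary : Matrix n n ℂ) * (hM.eigenvectorUnitary : Matrix n n ℂ)ᴴ = 1 :=
    Matrix.mem_unitaryGroup_iff.mp hM.eigenvectorUnitary.2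
  have h2 : (hM.eigenvectorUnitary : Matrix n n ℂ)ᴴ * (hM.eigenvectorUnitary : Matrix n n ℂ) = 1 :=
    Matrix.mem_unitaryGroup_iff'.mp hM.eigenvectorUnitary.2
  set φ := conjAlgHom (hM.eigenvectorUnitary : Matrix n n ℂ) h1 h2 with hφ
  have hMφ : M = φ (Matrix.diagonal (RCLike.ofReal ∘ hM.eigenvalues)) := by
    conv_lhs => rw [hM.spectral_theorem]
    rfl
  conv_lhs => rw [hMφ]
  rw [Polynomial.aeval_algHom_apply]
  have hdiagonal : Polynomial.aeval (Matrix.diagonal (RCLike.ofReal ∘ hM.eigenvalues)) q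
      = Matrix.diagonal (fun i => ((q.eval (hM.eigenvalues i) : ℝ) : ℂ)) := by
    have : Matrix.diagonal (RCLike.ofReal ∘ hM.eigenvalues)
        = (Matrix.diagonalAlgHom (n := n) (α := ℂ) ℝ) (RCLike.ofReal ∘ hM.eigenvalues) := rfl
    rw [this, Polynomial.aeval_algHom_apply]
    show Matrix.diagonal (Polynomial.aeval (RCLike.ofReal ∘ hM.eigenvalues) q) = _
    refine congrArg Matrix.diagonal (funext fun i => ?_)
    have := Polynomial.aeval_algHom_apply (Pi.evalAlgHom ℝ (fun _ : n => ℂ) i)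
      (RCLike.ofReal ∘ hM.eigenvalues) q
    rw [show (Pi.evalAlgHom ℝ (fun _ : n => ℂ) i) (RCLike.ofReal ∘ hM.eigenvalues)
      = ((hM.eigenvalues i : ℝ) : ℂ) from rfl] at this
    have h6 : ((Polynomial.aeval (RCLike.ofReal ∘ hM.eigenvalues)) q) i
        = (Polynomial.aeval ((hM.eigenvalues i : ℝ) : ℂ)) q := this.symm
    rw [h6]
    have h5 : ((hM.eigenvalues i : ℝ) : ℂ) = algebraMap ℝ ℂ (hM.eigenvalues i) := rfl
    rw [h5, Polynomial.aeval_algebraMap_apply_eq_algebraMap_eval]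
    rfl
  rw [hdiagonal]
  rfl


lemma matRpow_trace_re {M : Matrix n n ℂ} (hM : M.IsHermitian) (r : ℝ) (C : Matrix n n ℂ) :
    (matRpow M r * C).trace.re = ∑ i, hM.eigenvalues i ^ r *
      (((hM.eigenvectorUnitary : Matrix n n ℂ)ᴴ * C * hM.eigenvectorUnitary) i i).re := by
  rw [matRpow_eq hM, trace_conj_diag_mul, Complex.re_sum]
  exact Finset.sum_congr rfl fun i _ => by
    simp [Complex.mul_re]

lemma aeval_trace_re {M : Matrix n n ℂ} (hM : M.IsHermitian) (q : ℝ[X]) (C : Matrix n n ℂ) :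
    ((Polynomial.aeval M q) * C).trace.re = ∑ i, q.eval (hM.eigenvalues i) *
      (((hM.eigenvectorUnitary : Matrix n n ℂ)ᴴ * C * hM.eigenvectorUnitary) i i).re := by
  rw [aeval_hermitian hM, trace_conj_diag_mul, Complex.re_sum]
  exact Finset.sum_congr rfl fun i _ => by
    simp [Complex.mul_re]

lemma psd_trace_re_nonneg {C : Matrix n n ℂ} (hC : C.PosSemidef) : 0 ≤ C.trace.re := by
  rw [show C.trace = ∑ i, C i i from rfl, Complex.re_sum]
  exact Finset.sum_nonneg fun i _ => psd_re_diag_nonneg hC i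

lemma psd_eigen_le_trace {M : Matrix n n ℂ} (hM : M.PosSemidef) (i : n) :
    hM.1.eigenvalues i ≤ M.trace.re := by
  have h1 : M.trace.re = ∑ j, hM.1.eigenvalues j := by
    rw [trace_eq_sum_eigenvalues hM.1, ← Complex.ofReal_sum, Complex.ofReal_re]
  rw [h1]
  exact Finset.single_le_sum (fun j _ => hM.eigenvalues_nonneg j) (Finset.mem_univ i)

lemma approx_bound {M C : Matrix n n ℂ} (hM : M.PosSemidef) (hC : C.PosSemidef) (r : ℝ)
    (q : ℝ[X]) {R ε : ℝ} (hR : ∀ i, hM.1.eigenvalues i ≤ R)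
    (hq : ∀ x ∈ Set.Icc (0:ℝ) R, |x ^ r - q.eval x| ≤ ε) :
    |(matRpow M r * C).trace.re - ((Polynomial.aeval M q) * C).trace.re| ≤ ε * C.trace.re := by
  set U : Matrix n n ℂ := (hM.1.eigenvectorUnitary : Matrix n n ℂ) with hU
  have hUU : U * Uᴴ = 1 := Matrix.mem_unitaryGroup_iff.mp hM.1.eigenvectorUnitary.2
  set wgt : n → ℝ := fun i => ((Uᴴ * C * U) i i).re with hwgt
  have hw : ∀ i, 0 ≤ wgt i := fun i => psd_re_diag_nonneg (hC.conjTranspose_mul_mul_same U) i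
  have hsum : ∑ i, wgt i = C.trace.re := by
    have h1 : (Uᴴ * C * U).trace = C.trace := by
      rw [Matrix.trace_mul_cycle, hUU, one_mul]
    have h2 : (Uᴴ * C * U).trace = ∑ i, (Uᴴ * C * U) i i := rfl
    rw [← h1, h2, Complex.re_sum]
  rw [matRpow_trace_re hM.1, aeval_trace_re hM.1, ← Finset.sum_sub_distrib]
  calc |∑ i, (hM.1.eigenvalues i ^ r * wgt i - q.eval (hM.1.eigenvalues i) * wgt i)|
      ≤ ∑ i, |hM.1.eigenvalues i ^ r * wgt i - q.eval (hM.1.eigenvalues i) * wgt i| :=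
        Finset.abs_sum_le_sum_abs _ _
    _ ≤ ∑ i, ε * wgt i := by
        refine Finset.sum_le_sum fun i _ => ?_
        rw [← sub_mul, abs_mul, abs_of_nonneg (hw i)]
        exact mul_le_mul_of_nonneg_right
          (hq _ (Set.mem_Icc.mpr ⟨hM.eigenvalues_nonneg i, hR i⟩)) (hw i)
    _ = ε * C.trace.re := by rw [← Finset.mul_sum, hsum]

lemma psi_continuous (q : ℝ[X]) (B Δ : Matrix n n ℂ) :
    Continuous fun t : ℝ => ((Polynomial.aeval (B + t • Δ) q) * Δ).trace.re := by
  have h1 : Continuous fun t : ℝ => B + t • Δ :=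
    continuous_const.add (continuous_id.smul continuous_const)
  have h2 : Continuous fun A : Matrix n n ℂ => Polynomial.aeval A q := q.continuous_aeval
  exact Complex.continuous_re.comp (((h2.comp h1).mul continuous_const).matrix_trace)


/-- for PSD `B`, `Δ` and `p ≥ 1`, the (one-sided) derivative at `t = 0` of
`t ↦ Tr (B + tΔ)^p` equals `p · Tr(B^{p−1} Δ)`. -/
theorem stmt15 (n : ℕ) (B Δ : Matrix (Fin n) (Fin n) ℂ)
    (hB : B.PosSemidef) (hΔ : Δ.PosSemidef) (p : ℝ) (hp : 1 ≤ p) :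
    HasDerivWithinAt (fun t : ℝ => trPow (B + t • Δ) p)
      (p * (matRpow B (p - 1) * Δ).trace.re) (Set.Ici 0) 0 := by
  classical
  have hp0 : 0 < p := lt_of_lt_of_le one_pos hp
  set g : ℝ → ℝ := fun t => trPow (B + t • Δ) p with hgdef
  set φ : ℝ → ℝ := fun t => p * ((matRpow (B + t • Δ) (p-1)) * Δ).trace.re with hφdef
  have hφeq : ∀ t, φ t = p * ((matRpow (B + t • Δ) (p-1)) * Δ).trace.re := fun t => rfl
  have hgeq : ∀ t, g t = trPow (B + t • Δ) p := fun t => rfl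
  have hB0 : B + (0:ℝ) • Δ = B := by simp
  have hfps : ∀ t : ℝ, 0 ≤ t → (B + t • Δ).PosSemidef := fun t ht => hB.add (psd_smul hΔ ht)
  have hg0 : g 0 = trPow B p := by rw [hgeq, hB0]
  have hφ0 : φ 0 = p * ((matRpow B (p-1)) * Δ).trace.re := by rw [hφeq, hB0]
  have lower : ∀ t : ℝ, 0 < t → t * φ 0 ≤ g t - g 0 := by
    intro t ht
    have hK := klein (hfps t ht.le) hB hp
    have hsub : (B + t • Δ) - B = t • Δ := by abel
    rw [hsub] at hK
    have htr : ((matRpow B (p-1)) * (t • Δ)).trace.re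
        = t * ((matRpow B (p-1)) * Δ).trace.re := by
      rw [mul_smul_comm, Matrix.trace_smul]
      simp [Complex.real_smul, Complex.mul_re]
    rw [htr] at hK
    rw [hg0, hgeq, hφ0]
    nlinarith [hK]
  have upper : ∀ t : ℝ, 0 < t → g t - g 0 ≤ t * φ t := by
    intro t ht
    have hK := klein (X := B) (Y := B + t • Δ) hB (hfps t ht.le) hp
    have hsub : B - (B + t • Δ) = (-t) • Δ := by
      rw [neg_smul]; abel
    rw [hsub] at hK
    have htr : ((matRpow (B + t • Δ) (p-1)) * ((-t) • Δ)).trace.re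
        = (-t) * ((matRpow (B + t • Δ) (p-1)) * Δ).trace.re := by
      rw [mul_smul_comm, Matrix.trace_smul]
      simp [Complex.real_smul, Complex.mul_re]
    rw [htr] at hK
    rw [hg0, hgeq, hφeq]
    nlinarith [hK]
  have hcont : Filter.Tendsto φ (nhdsWithin 0 (Set.Ici 0)) (nhds (φ 0)) := by
    rw [Metric.tendsto_nhdsWithin_nhds]
    intro ε hε
    have hTrΔ0 : 0 ≤ Δ.trace.re := psd_trace_re_nonneg hΔ
    set TrΔ := Δ.trace.re with hTrΔdef
    set R := B.trace.re + TrΔ with hRdef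
    have hden : 0 < 3 * (p * TrΔ + 1) := by positivity
    set ε' := ε / (3 * (p * TrΔ + 1)) with hε'def
    have hε'pos : 0 < ε' := div_pos hε hden
    have hcontf : ContinuousOn (fun x : ℝ => x ^ (p-1)) (Set.Icc 0 R) :=
      (Real.continuous_rpow_const (by linarith)).continuousOn
    obtain ⟨q, hq⟩ := exists_polynomial_near_of_continuousOn 0 R _ hcontf ε' hε'pos
    have hq' : ∀ x ∈ Set.Icc (0:ℝ) R, |x ^ (p-1) - q.eval x| ≤ ε' := fun x hx => by
      rw [abs_sub_comm]; exact (hq x hx).le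
    set ψ : ℝ → ℝ := fun t => p * ((Polynomial.aeval (B + t • Δ) q) * Δ).trace.re with hψdef
    have hψeq : ∀ t, ψ t = p * ((Polynomial.aeval (B + t • Δ) q) * Δ).trace.re := fun t => rfl
    have hψc : Continuous ψ := continuous_const.mul (psi_continuous q B Δ)
    have hψ0 := hψc.continuousAt (x := 0)
    rw [Metric.continuousAt_iff] at hψ0
    obtain ⟨δ₁, hδ₁pos, hδ₁⟩ := hψ0 (ε/3) (by linarith)
    refine ⟨min δ₁ 1, by positivity, ?_⟩
    intro t ht hdist
    rw [Real.dist_eq, sub_zero] at hdist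
    have ht0 : 0 ≤ t := ht
    have ht1 : t ≤ 1 := by
      have : |t| < 1 := lt_of_lt_of_le hdist (min_le_right _ _)
      have := le_of_abs_le this.le
      linarith
    have key : ∀ s : ℝ, 0 ≤ s → s ≤ 1 → |φ s - ψ s| ≤ ε / 3 := by
      intro s hs0 hs1
      have hfs := hfps s hs0
      have hRs : ∀ i, hfs.1.eigenvalues i ≤ R := by
        intro i
        refine (psd_eigen_le_trace hfs i).trans ?_
        have htr2 : (B + s • Δ).trace.re = B.trace.re + s * TrΔ := by
          rw [Matrix.trace_add, Matrix.trace_smul]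
          simp [Complex.add_re, Complex.real_smul, Complex.mul_re, hTrΔdef]
        rw [htr2, hRdef]
        nlinarith [hTrΔ0]
      have hb := approx_bound hfs hΔ (p-1) q hRs hq'
      rw [hφeq, hψeq, ← mul_sub, abs_mul, abs_of_pos hp0]
      calc p * |((matRpow (B + s • Δ) (p-1)) * Δ).trace.re
            - ((Polynomial.aeval (B + s • Δ) q) * Δ).trace.re|
          ≤ p * (ε' * TrΔ) := mul_le_mul_of_nonneg_left hb hp0.le
        _ ≤ ε / 3 := by
            rw [hε'def]
            rw [div_mul_eq_mul_div, mul_div_assoc', div_le_div_iff₀ hden (by norm_num : (0:ℝ) < 3)]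
            nlinarith [hε.le, hTrΔ0, hp0.le]
    have e1 := key t ht0 ht1
    have e0 := key 0 le_rfl zero_le_one
    have e2 : |ψ t - ψ 0| < ε/3 := by
      have h3 : dist t 0 < δ₁ := by
        rw [Real.dist_eq, sub_zero]; exact lt_of_lt_of_le hdist (min_le_left _ _)
      have := hδ₁ h3
      rwa [Real.dist_eq] at this
    rw [Real.dist_eq]
    have habs : |φ t - φ 0| ≤ |φ t - ψ t| + |ψ t - ψ 0| + |φ 0 - ψ 0| := by
      rw [abs_sub_comm (φ 0) (ψ 0)]
      calc |φ t - φ 0| = |(φ t - ψ t) + (ψ t - ψ 0) + (ψ 0 - φ 0)| := by ring_nf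
        _ ≤ |(φ t - ψ t) + (ψ t - ψ 0)| + |ψ 0 - φ 0| := abs_add_le _ _
        _ ≤ |φ t - ψ t| + |ψ t - ψ 0| + |ψ 0 - φ 0| := by
            have := abs_add_le (φ t - ψ t) (ψ t - ψ 0)
            linarith
    linarith [abs_sub_comm (φ 0) (ψ 0) ▸ e0]
  rw [hasDerivWithinAt_iff_tendsto_slope, Set.Ici_sdiff_left, ← hφ0]
  have hmono : Filter.Tendsto φ (nhdsWithin 0 (Set.Ioi 0)) (nhds (φ 0)) :=
    hcont.mono_left (nhdsWithin_mono 0 Set.Ioi_subset_Ici_self)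
  refine tendsto_of_tendsto_of_tendsto_of_le_of_le' tendsto_const_nhds hmono ?_ ?_
  · filter_upwards [self_mem_nhdsWithin] with t ht
    have ht' : 0 < t := ht
    rw [slope_def_field, sub_zero, le_div_iff₀ ht']
    have h5 := lower t ht'
    nlinarith [h5]
  · filter_upwards [self_mem_nhdsWithin] with t ht
    have ht' : 0 < t := ht
    rw [slope_def_field, sub_zero, div_le_iff₀ ht']
    have h5 := upper t ht'
    nlinarith [h5]
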